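/- arXiv:2011.10195 — 2 statements merged into one kernel-verified Lean document; each statement's English description precedes it below -/
import Mathlib

section
/- Let X_1, X_2, … be identically distributed real random variables with common cdf F such that both F and its quantile function F^{-1}(t) = inf{x : F(x) ≥ t} are continuous, and suppose the empirical cdfs satisfy sup_{x∈ℝ} |F_n(x) − F(x)| → 0 in probability, where F_n(x) = n^{-1} Σ_{t=1}^n 1{X_t ≤ x}. Then for every closed interval [t_0, t_1] ⊂ (0, 1), sup_{t∈[t_0,t_1]} |F_n^{-1}(t) − F^{-1}(t)| → 0 in probability as n → ∞, where F_n^{-1}(t) = inf{x : F_n(x) ≥ t} is the empirical quantile function. -/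
/-!
Write `F` for the common cdf. If `|G - F| ≤ δ` everywhere, then
`{x | t + δ ≤ F x} ⊆ {x | t ≤ G x} ⊆ {x | t - δ ≤ F x}`, so `G⁻¹ t` (and likewise `F⁻¹ t`) lies
between `F⁻¹ (t - δ)` and `F⁻¹ (t + δ)`. Uniform continuity of `F⁻¹` on a compact interval
slightly larger than `[t₀, t₁]` makes these two values `ε`-close for small `δ`, uniformly in `t`.
Hence the event `sup_t |F_n⁻¹ t - F⁻¹ t| ≥ ε` is contained in `sup_x |F_n x - F x| ≥ δ`, whose
probability tends to zero.
-/

open MeasureTheory ProbabilityTheory Filter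
open scoped Classical

/-- The cumulative distribution function of a random variable `X` under `P`. -/
noncomputable def cdfOf {Ω : Type*} [MeasurableSpace Ω] (P : Measure Ω) (X : Ω → ℝ) : ℝ → ℝ :=
  fun x => (P {ω | X ω ≤ x}).toReal

/-- The empirical cdf of the sample `X 1, …, X n`. -/
noncomputable def empCDF {Ω : Type*} (X : ℕ → Ω → ℝ) (n : ℕ) (ω : Ω) (x : ℝ) : ℝ :=
  (n : ℝ)⁻¹ * ∑ t ∈ Finset.Icc 1 n, if X t ω ≤ x then (1 : ℝ) else 0

/-- The quantile function `G⁻¹ t = inf {x : G x ≥ t}` of a (c)df `G`. -/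
noncomputable def quantile (G : ℝ → ℝ) (t : ℝ) : ℝ := sInf {x | t ≤ G x}

/-- Convergence in probability of `Z n` to the constant `c`. -/
def TendstoInProb {Ω : Type*} [MeasurableSpace Ω] (P : Measure Ω)
    (Z : ℕ → Ω → ℝ) (c : ℝ) : Prop :=
  ∀ ε : ℝ, 0 < ε → Tendsto (fun n => P {ω | ε ≤ |Z n ω - c|}) atTop (nhds 0)

section Quantile

variable {F G : ℝ → ℝ}

lemma nonempty_setOf_le_of_tendsto_atTop (hF₁ : Tendsto F atTop (nhds 1)) {s : ℝ} (hs : s < 1) :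
    {x | s ≤ F x}.Nonempty :=
  let ⟨x, hx⟩ := (hF₁.eventually (eventually_gt_nhds hs)).exists
  ⟨x, hx.le⟩

lemma bddBelow_setOf_le_of_tendsto_atBot (hF : Monotone F) (hF₀ : Tendsto F atBot (nhds 0))
    {s : ℝ} (hs : 0 < s) : BddBelow {x | s ≤ F x} :=
  let ⟨x₀, hx₀⟩ := (hF₀.eventually (eventually_lt_nhds hs)).exists
  ⟨x₀, fun _ hx => (hF.reflect_lt (hx₀.trans_le hx)).le⟩

lemma quantile_mem_Icc_of_abs_sub_le (hF : Monotone F) (hF₁ : Tendsto F atTop (nhds 1))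
    (hF₀ : Tendsto F atBot (nhds 0)) {δ t : ℝ} (hGF : ∀ x, |G x - F x| ≤ δ)
    (ht₀ : 0 < t - δ) (ht₁ : t + δ < 1) :
    quantile G t ∈ Set.Icc (quantile F (t - δ)) (quantile F (t + δ)) := by
  have hupper : {x | t + δ ≤ F x} ⊆ {x | t ≤ G x} := fun x hx => by
    simp only [Set.mem_ofPred_eq] at hx ⊢
    linarith [abs_le.mp (hGF x)]
  have hlower : {x | t ≤ G x} ⊆ {x | t - δ ≤ F x} := fun x hx => by
    simp only [Set.mem_ofPred_eq] at hx ⊢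
    linarith [abs_le.mp (hGF x)]
  have hne := nonempty_setOf_le_of_tendsto_atTop hF₁ ht₁
  have hbdd := bddBelow_setOf_le_of_tendsto_atBot hF hF₀ ht₀
  exact ⟨csInf_le_csInf hbdd (hne.mono hupper) hlower,
    csInf_le_csInf (hbdd.mono hlower) hne hupper⟩

lemma exists_pos_forall_abs_quantile_sub_le (hF : Monotone F) (hF₁ : Tendsto F atTop (nhds 1))
    (hF₀ : Tendsto F atBot (nhds 0)) (hq : ContinuousOn (quantile F) (Set.Ioo 0 1))
    {t₀ t₁ ε : ℝ} (ht₀ : 0 < t₀) (ht₁ : t₁ < 1) (hε : 0 < ε) :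
    ∃ δ > 0, ∀ G : ℝ → ℝ, (∀ x, |G x - F x| ≤ δ) →
      ∀ t ∈ Set.Icc t₀ t₁, |quantile G t - quantile F t| ≤ ε := by
  have hK : Set.Icc (t₀ / 2) ((1 + t₁) / 2) ⊆ Set.Ioo 0 1 :=
    fun s hs => ⟨by linarith [hs.1], by linarith [hs.2]⟩
  obtain ⟨η, hη, huc⟩ := Metric.uniformContinuousOn_iff_le.mp
    (isCompact_Icc.uniformContinuousOn_of_continuous (hq.mono hK)) ε hε
  set δ := min (η / 2) (min (t₀ / 2) ((1 - t₁) / 2))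
  have hδ : 0 < δ := lt_min (by linarith) (lt_min (by linarith) (by linarith))
  have hδη : δ ≤ η / 2 := min_le_left _ _
  have hδt₀ : δ ≤ t₀ / 2 := (min_le_right _ _).trans (min_le_left _ _)
  have hδt₁ : δ ≤ (1 - t₁) / 2 := (min_le_right _ _).trans (min_le_right _ _)
  refine ⟨δ, hδ, fun G hGF t ⟨htt₀, htt₁⟩ => ?_⟩
  have hG := quantile_mem_Icc_of_abs_sub_le (t := t) hF hF₁ hF₀ hGF (by linarith) (by linarith)
  have hFF := quantile_mem_Icc_of_abs_sub_le (G := F) (δ := δ) (t := t) hF hF₁ hF₀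
    (by simp [hδ.le]) (by linarith) (by linarith)
  have hspread : dist (quantile F (t + δ)) (quantile F (t - δ)) ≤ ε :=
    huc _ ⟨by linarith, by linarith⟩ _ ⟨by linarith, by linarith⟩
      (by rw [Real.dist_eq, abs_le]; constructor <;> linarith)
  calc |quantile G t - quantile F t|
      ≤ quantile F (t + δ) - quantile F (t - δ) := abs_sub_le_of_le_of_le hG.1 hG.2 hFF.1 hFF.2
    _ ≤ ε := (le_abs_self _).trans (Real.dist_eq _ _ ▸ hspread)

end Quantile

lemma abs_sub_le_iSup_abs_sub {F G : ℝ → ℝ} (hF : ∀ x, F x ∈ Set.Icc 0 1)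
    (hG : ∀ x, G x ∈ Set.Icc 0 1) (x : ℝ) : |G x - F x| ≤ ⨆ y, |G y - F y| :=
  le_ciSup ⟨(1 : ℝ), by
    rintro _ ⟨y, rfl⟩
    exact abs_sub_le_of_nonneg_of_le (hG y).1 (hG y).2 (hF y).1 (hF y).2⟩ x

lemma empCDF_mem_Icc {Ω : Type*} (X : ℕ → Ω → ℝ) (n : ℕ) (ω : Ω) (x : ℝ) :
    empCDF X n ω x ∈ Set.Icc 0 1 := by
  have hcount : ((Finset.Icc 1 n).filter (fun t => X t ω ≤ x)).card ≤ n :=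
    (Finset.card_filter_le _ _).trans (by simp)
  rw [empCDF, Finset.sum_boole]
  exact ⟨by positivity, inv_mul_le_one_of_le₀ (by exact_mod_cast hcount) n.cast_nonneg⟩

lemma cdfOf_eq_cdf_map {Ω : Type*} [MeasurableSpace Ω] (P : Measure Ω) [IsProbabilityMeasure P]
    {X : Ω → ℝ} (hX : Measurable X) : cdfOf P X = cdf (P.map X) := by
  have := Measure.isProbabilityMeasure_map (μ := P) hX.aemeasurable
  funext x
  rw [cdf_eq_real, measureReal_def, Measure.map_apply hX measurableSet_Iic]
  rfl

theorem stmt_9_general {Ω : Type*} [MeasurableSpace Ω] (P : Measure Ω) [IsProbabilityMeasure P]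
    (X : ℕ → Ω → ℝ) (hmeas : ∀ t, Measurable (X t))
    (hqcont : ContinuousOn (quantile (cdfOf P (X 1))) (Set.Ioo 0 1))
    (hgc : ∀ ε : ℝ, 0 < ε →
      Tendsto (fun n => P {ω | ε ≤ ⨆ x : ℝ, |empCDF X n ω x - cdfOf P (X 1) x|})
        atTop (nhds 0)) :
    ∀ t₀ t₁ : ℝ, 0 < t₀ → t₀ ≤ t₁ → t₁ < 1 →
      TendstoInProb P
        (fun n ω => ⨆ t : Set.Icc t₀ t₁,
          |quantile (empCDF X n ω) (t : ℝ) - quantile (cdfOf P (X 1)) (t : ℝ)|) 0 := by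
  intro t₀ t₁ ht₀ _ ht₁ ε hε
  have := Measure.isProbabilityMeasure_map (μ := P) (hmeas 1).aemeasurable
  rw [cdfOf_eq_cdf_map P (hmeas 1)] at hqcont hgc ⊢
  set F := cdf (P.map (X 1))
  obtain ⟨δ, hδ, hclose⟩ := exists_pos_forall_abs_quantile_sub_le (monotone_cdf _)
    (tendsto_cdf_atTop _) (tendsto_cdf_atBot _) hqcont ht₀ ht₁ (half_pos hε)
  refine tendsto_of_tendsto_of_tendsto_of_le_of_le tendsto_const_nhds (hgc δ hδ)
    (fun _ => zero_le) (fun n => measure_mono fun ω hω => ?_)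
  simp only [Set.mem_ofPred_eq, sub_zero] at hω ⊢
  by_contra! hsup
  have hGF (x : ℝ) : |empCDF X n ω x - F x| ≤ δ :=
    (abs_sub_le_iSup_abs_sub (fun y => ⟨cdf_nonneg _ y, cdf_le_one _ y⟩)
      (empCDF_mem_Icc X n ω) x).trans hsup.le
  have hquantile : ⨆ t : Set.Icc t₀ t₁, |quantile (empCDF X n ω) t - quantile F t| ≤ ε / 2 :=
    Real.iSup_le (fun t => hclose _ hGF t t.2) (by positivity)
  rw [abs_of_nonneg (Real.iSup_nonneg fun _ => abs_nonneg _)] at hω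
  linarith

theorem stmt_9 {Ω : Type*} [MeasurableSpace Ω] (P : Measure Ω) [IsProbabilityMeasure P]
    (X : ℕ → Ω → ℝ) (hmeas : ∀ t, Measurable (X t))
    (hid : ∀ t : ℕ, 1 ≤ t → IdentDistrib (X t) (X 1) P P)
    (hcont : Continuous (cdfOf P (X 1)))
    (hqcont : ContinuousOn (quantile (cdfOf P (X 1))) (Set.Ioo 0 1))
    (hgc : ∀ ε : ℝ, 0 < ε →
      Tendsto (fun n => P {ω | ε ≤ ⨆ x : ℝ, |empCDF X n ω x - cdfOf P (X 1) x|})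
        atTop (nhds 0)) :
    ∀ t₀ t₁ : ℝ, 0 < t₀ → t₀ ≤ t₁ → t₁ < 1 →
      TendstoInProb P
        (fun n ω => ⨆ t : Set.Icc t₀ t₁,
          |quantile (empCDF X n ω) (t : ℝ) - quantile (cdfOf P (X 1)) (t : ℝ)|) 0 :=
  stmt_9_general P X hmeas hqcont hgc
end

section
/- Let (X_t)_{t∈ℤ} be a sequence of real random variables, let (δ_t)_{t∈ℤ} be iid real random variables independent of the sequence (X_t), let g : ℝ³ → ℝ be measurable, and define ξ_t = g(X_t, δ_t, δ_{t-1}). Then for every integer t ≥ 2, the strong mixing coefficients satisfy α_ξ(t) ≤ α_X(t), i.e., sup{|P(A∩B) − P(A)P(B)| : A ∈ σ(ξ_u : u ≤ 0), B ∈ σ(ξ_v : v ≥ t)} ≤ sup{|P(A∩B) − P(A)P(B)| : A ∈ σ(X_u : u ≤ 0), B ∈ σ(X_v : v ≥ t)}. -/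
open MeasureTheory ProbabilityTheory Filter

/-- The σ-algebra `σ(W u : u ≤ 0)` generated by the past of the sequence. -/
def pastSigma {Ω : Type*} (W : ℤ → Ω → ℝ) : MeasurableSpace Ω :=
  ⨆ u : ℤ, ⨆ _ : u ≤ 0, MeasurableSpace.comap (W u) inferInstance

/-- The σ-algebra `σ(W v : v ≥ t)` generated by the future of the sequence from time `t`. -/
def futureSigma {Ω : Type*} (W : ℤ → Ω → ℝ) (t : ℤ) : MeasurableSpace Ω :=
  ⨆ v : ℤ, ⨆ _ : t ≤ v, MeasurableSpace.comap (W v) inferInstance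

/-- The strong (α-) mixing coefficient of the sequence `W` at lag `t`. -/
noncomputable def alphaMix {Ω : Type*} [MeasurableSpace Ω] (P : Measure Ω)
    (W : ℤ → Ω → ℝ) (t : ℤ) : ℝ :=
  sSup {r : ℝ | ∃ A B : Set Ω, MeasurableSet[pastSigma W] A ∧
    MeasurableSet[futureSigma W t] B ∧
    r = |(P (A ∩ B)).toReal - (P A).toReal * (P B).toReal|}

/-!
The past of `ξ` is generated by the past of `X` together with the noise block `(δ u)_{u ≤ 0}`, and
its future from time `t` by the future of `X` together with `(δ v)_{v ≥ t - 1}`. For `t ≥ 2` these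
two noise blocks are disjoint, hence independent of each other and, jointly, of `X`. Conditioning on
the noise (Fubini for the joint law, which is a product measure), `P(A ∩ B) - P(A) P(B)` becomes an
average over noise values of `P(F ∩ G) - P(F) P(G)` with `F` in the past and `G` in the future of
`X`, each bounded by `α_X(t)`.
-/

theorem MeasurableSpace.prod_mono_right {α β : Type*} {m₁ : MeasurableSpace α}
    {m₂ m₂' : MeasurableSpace β} (h : m₂ ≤ m₂') : m₁.prod m₂ ≤ m₁.prod m₂' :=
  sup_le_sup_left (MeasurableSpace.comap_mono h) _

theorem MeasurableSpace.comap_pi_eq_iSup {Ω ι β : Type*} [m : MeasurableSpace β]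
    (f : ι → Ω → β) :
    MeasurableSpace.pi.comap (fun ω i => f i ω) = ⨆ i, m.comap (f i) := by
  simp_rw [MeasurableSpace.pi, MeasurableSpace.comap_iSup, MeasurableSpace.comap_comp]
  rfl

theorem measureReal_preimage_prodMk_eq_integral_of_indepFun {Ω Γ Λ : Type*}
    [MeasurableSpace Ω] [MeasurableSpace Γ] [MeasurableSpace Λ] {P : Measure Ω} [IsFiniteMeasure P]
    {Z : Ω → Λ} {Y : Ω → Γ} (hZ : Measurable Z) (hY : Measurable Y) (hZY : IndepFun Z Y P)
    {S : Set (Λ × Γ)} (hS : MeasurableSet S) :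
    P.real ((fun ω => (Z ω, Y ω)) ⁻¹' S) = ∫ ω, (P.map Y).real (Prod.mk (Z ω) ⁻¹' S) ∂P := by
  have hlaw : P.map (fun ω => (Z ω, Y ω)) = (P.map Z).prod (P.map Y) :=
    (indepFun_iff_map_prod_eq_prod_map_map hZ.aemeasurable hY.aemeasurable).mp hZY
  have hsec : Measurable fun z => P.map Y (Prod.mk z ⁻¹' S) :=
    measurable_measure_prodMk_left hS
  rw [← map_measureReal_apply (hZ.prodMk hY) hS, hlaw, measureReal_def, Measure.prod_apply hS,
    lintegral_map hsec hZ]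
  exact (integral_toReal (hsec.comp hZ).aemeasurable
    (ae_of_all _ fun _ => measure_lt_top _ _)).symm

section IndependentNoise

variable {Ω Γ Λ₀ Λ₁ : Type*} [MeasurableSpace Ω] {MF MG : MeasurableSpace Γ}
  [mΓ : MeasurableSpace Γ] [mΛ₀ : MeasurableSpace Λ₀] [mΛ₁ : MeasurableSpace Λ₁]
  {P : Measure Ω} [IsProbabilityMeasure P] {Y : Ω → Γ} {Z₀ : Ω → Λ₀} {Z₁ : Ω → Λ₁} {α : ℝ}

theorem measureReal_inter_sub_mul_eq_integral_of_indepFun (hY : Measurable Y)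
    (hZ₀ : Measurable Z₀) (hZ₁ : Measurable Z₁) (h01 : IndepFun Z₀ Z₁ P)
    (hZY : IndepFun (fun ω => (Z₀ ω, Z₁ ω)) Y P)
    {A' : Set (Λ₀ × Γ)} {B' : Set (Λ₁ × Γ)} (hA' : MeasurableSet A')
    (hB' : MeasurableSet B') :
    P.real ((fun ω => (Z₀ ω, Y ω)) ⁻¹' A' ∩ (fun ω => (Z₁ ω, Y ω)) ⁻¹' B')
        - P.real ((fun ω => (Z₀ ω, Y ω)) ⁻¹' A') * P.real ((fun ω => (Z₁ ω, Y ω)) ⁻¹' B')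
      = ∫ ω, ((P.map Y).real (Prod.mk (Z₀ ω) ⁻¹' A' ∩ Prod.mk (Z₁ ω) ⁻¹' B')
          - (P.map Y).real (Prod.mk (Z₀ ω) ⁻¹' A') * (P.map Y).real (Prod.mk (Z₁ ω) ⁻¹' B'))
        ∂P := by
  have : IsProbabilityMeasure (P.map Y) := Measure.isProbabilityMeasure_map hY.aemeasurable
  set μ := P.map Y
  set S : Set ((Λ₀ × Λ₁) × Γ) := {p | (p.1.1, p.2) ∈ A' ∧ (p.1.2, p.2) ∈ B'}
  have hS : MeasurableSet S :=
    (measurable_fst.fst.prodMk measurable_snd hA').inter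
      (measurable_fst.snd.prodMk measurable_snd hB')
  set φ : Λ₀ → ℝ := fun y => μ.real (Prod.mk y ⁻¹' A')
  set ψ : Λ₁ → ℝ := fun y => μ.real (Prod.mk y ⁻¹' B')
  have hφ : Measurable φ := (measurable_measure_prodMk_left hA').ennreal_toReal
  have hψ : Measurable ψ := (measurable_measure_prodMk_left hB').ennreal_toReal
  have hχ : Measurable fun y => μ.real (Prod.mk y ⁻¹' S) :=
    (measurable_measure_prodMk_left hS).ennreal_toReal
  have hunit : ∀ s, μ.real s ∈ Set.Icc 0 1 := fun _ => ⟨measureReal_nonneg, measureReal_le_one⟩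
  have hint_inter : Integrable (fun ω => μ.real (Prod.mk (Z₀ ω, Z₁ ω) ⁻¹' S)) P :=
    .of_mem_Icc 0 1 (hχ.comp (hZ₀.prodMk hZ₁)).aemeasurable (ae_of_all _ fun _ => hunit _)
  have hint_mul : Integrable (fun ω => φ (Z₀ ω) * ψ (Z₁ ω)) P :=
    .of_mem_Icc 0 1 ((hφ.comp hZ₀).mul (hψ.comp hZ₁)).aemeasurable (ae_of_all _ fun _ =>
      ⟨mul_nonneg (hunit _).1 (hunit _).1, mul_le_one₀ (hunit _).2 (hunit _).1 (hunit _).2⟩)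
  have hmul : (∫ ω, φ (Z₀ ω) ∂P) * ∫ ω, ψ (Z₁ ω) ∂P = ∫ ω, φ (Z₀ ω) * ψ (Z₁ ω) ∂P :=
    ((h01.comp hφ hψ).integral_fun_mul_eq_mul_integral (hφ.comp hZ₀).aestronglyMeasurable
      (hψ.comp hZ₁).aestronglyMeasurable).symm
  rw [show (fun ω => (Z₀ ω, Y ω)) ⁻¹' A' ∩ (fun ω => (Z₁ ω, Y ω)) ⁻¹' B'
      = (fun ω => ((Z₀ ω, Z₁ ω), Y ω)) ⁻¹' S from rfl,
    measureReal_preimage_prodMk_eq_integral_of_indepFun (hZ₀.prodMk hZ₁) hY hZY hS,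
    measureReal_preimage_prodMk_eq_integral_of_indepFun hZ₀ hY
      (hZY.comp measurable_fst measurable_id) hA',
    measureReal_preimage_prodMk_eq_integral_of_indepFun hZ₁ hY
      (hZY.comp measurable_snd measurable_id) hB', hmul, ← integral_sub hint_inter hint_mul]
  rfl

theorem abs_measureReal_inter_sub_mul_le_of_indepFun_noise (hY : Measurable Y)
    (hZ₀ : Measurable Z₀) (hZ₁ : Measurable Z₁) (h01 : IndepFun Z₀ Z₁ P)
    (hZY : IndepFun (fun ω => (Z₀ ω, Z₁ ω)) Y P) (hMF : MF ≤ mΓ) (hMG : MG ≤ mΓ)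
    (hα : ∀ A B, MeasurableSet[MF.comap Y] A → MeasurableSet[MG.comap Y] B →
      |P.real (A ∩ B) - P.real A * P.real B| ≤ α)
    {A B : Set Ω} (hA : MeasurableSet[MF.comap Y ⊔ mΛ₀.comap Z₀] A)
    (hB : MeasurableSet[MG.comap Y ⊔ mΛ₁.comap Z₁] B) :
    |P.real (A ∩ B) - P.real A * P.real B| ≤ α := by
  rw [sup_comm, ← MeasurableSpace.comap_prodMk] at hA hB
  obtain ⟨A', hA', rfl⟩ := hA
  obtain ⟨B', hB', rfl⟩ := hB
  have hsec : ∀ y₀ y₁, |(P.map Y).real (Prod.mk y₀ ⁻¹' A' ∩ Prod.mk y₁ ⁻¹' B')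
      - (P.map Y).real (Prod.mk y₀ ⁻¹' A') * (P.map Y).real (Prod.mk y₁ ⁻¹' B')| ≤ α := by
    intro y₀ y₁
    have hF := measurable_prodMk_left (mβ := MF) (x := y₀) hA'
    have hG := measurable_prodMk_left (mβ := MG) (x := y₁) hB'
    rw [map_measureReal_apply hY ((hMF _ hF).inter (hMG _ hG)),
      map_measureReal_apply hY (hMF _ hF), map_measureReal_apply hY (hMG _ hG)]
    exact hα _ _ ⟨_, hF, rfl⟩ ⟨_, hG, rfl⟩
  rw [measureReal_inter_sub_mul_eq_integral_of_indepFun hY hZ₀ hZ₁ h01 hZY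
    (MeasurableSpace.prod_mono_right hMF _ hA') (MeasurableSpace.prod_mono_right hMG _ hB')]
  simpa using norm_integral_le_of_norm_le_const (μ := P)
    (ae_of_all P fun ω => (Real.norm_eq_abs _).trans_le (hsec (Z₀ ω) (Z₁ ω)))

end IndependentNoise

section Sequences

variable {Ω : Type*}

theorem comap_le_pastSigma (W : ℤ → Ω → ℝ) {u : ℤ} (hu : u ≤ 0) :
    MeasurableSpace.comap (W u) inferInstance ≤ pastSigma W :=
  le_iSup₂_of_le u hu le_rfl

theorem comap_le_futureSigma (W : ℤ → Ω → ℝ) {t v : ℤ} (hv : t ≤ v) :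
    MeasurableSpace.comap (W v) inferInstance ≤ futureSigma W t :=
  le_iSup₂_of_le v hv le_rfl

theorem pastSigma_le [m : MeasurableSpace Ω] {W : ℤ → Ω → ℝ} (hW : ∀ s, Measurable (W s)) :
    pastSigma W ≤ m :=
  iSup₂_le fun u _ => (hW u).comap_le

theorem futureSigma_le [m : MeasurableSpace Ω] {W : ℤ → Ω → ℝ} (hW : ∀ s, Measurable (W s))
    (t : ℤ) : futureSigma W t ≤ m :=
  iSup₂_le fun v _ => (hW v).comap_le

theorem pastSigma_eq_comap_path (W : ℤ → Ω → ℝ) :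
    pastSigma W = (pastSigma fun s (p : ℤ → ℝ) => p s).comap fun ω s => W s ω := by
  simp_rw [pastSigma, MeasurableSpace.comap_iSup, MeasurableSpace.comap_comp]
  rfl

theorem futureSigma_eq_comap_path (W : ℤ → Ω → ℝ) (t : ℤ) :
    futureSigma W t = (futureSigma (fun s (p : ℤ → ℝ) => p s) t).comap fun ω s => W s ω := by
  simp_rw [futureSigma, MeasurableSpace.comap_iSup, MeasurableSpace.comap_comp]
  rfl

theorem pastSigma_eq_comap_restrict (W : ℤ → Ω → ℝ) :
    pastSigma W = MeasurableSpace.pi.comap fun ω (u : {u : ℤ // u ≤ 0}) => W u ω := by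
  rw [MeasurableSpace.comap_pi_eq_iSup, iSup_subtype]
  rfl

theorem futureSigma_eq_comap_restrict (W : ℤ → Ω → ℝ) (t : ℤ) :
    futureSigma W t = MeasurableSpace.pi.comap fun ω (v : {v : ℤ // t ≤ v}) => W v ω := by
  rw [MeasurableSpace.comap_pi_eq_iSup, iSup_subtype]
  rfl

theorem pastSigma_comp_le_sup {g : ℝ × ℝ × ℝ → ℝ} (hg : Measurable g)
    (X δ : ℤ → Ω → ℝ) :
    pastSigma (fun s ω => g (X s ω, δ s ω, δ (s - 1) ω)) ≤ pastSigma X ⊔ pastSigma δ := by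
  refine iSup₂_le fun u hu => measurable_iff_comap_le.mp (hg.comp ?_)
  refine .prodMk ?_ (.prodMk ?_ ?_) <;> refine measurable_iff_comap_le.mpr ?_
  · exact (comap_le_pastSigma X hu).trans le_sup_left
  · exact (comap_le_pastSigma δ hu).trans le_sup_right
  · exact (comap_le_pastSigma δ (by omega)).trans le_sup_right

theorem futureSigma_comp_le_sup {g : ℝ × ℝ × ℝ → ℝ} (hg : Measurable g)
    (X δ : ℤ → Ω → ℝ) (t : ℤ) :
    futureSigma (fun s ω => g (X s ω, δ s ω, δ (s - 1) ω)) t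
      ≤ futureSigma X t ⊔ futureSigma δ (t - 1) := by
  refine iSup₂_le fun v hv => measurable_iff_comap_le.mp (hg.comp ?_)
  refine .prodMk ?_ (.prodMk ?_ ?_) <;> refine measurable_iff_comap_le.mpr ?_
  · exact (comap_le_futureSigma X hv).trans le_sup_left
  · exact (comap_le_futureSigma δ (by omega)).trans le_sup_right
  · exact (comap_le_futureSigma δ (by omega)).trans le_sup_right

theorem ProbabilityTheory.iIndepFun.indepFun_restrict_past_future [MeasurableSpace Ω]
    {P : Measure Ω} {W : ℤ → Ω → ℝ} (hW : ∀ s, Measurable (W s)) (h : iIndepFun W P)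
    {t : ℤ} (ht : 0 < t) :
    IndepFun (fun ω (u : {u : ℤ // u ≤ 0}) => W u ω) (fun ω (v : {v : ℤ // t ≤ v}) => W v ω) P := by
  rw [IndepFun_iff_Indep, ← pastSigma_eq_comap_restrict, ← futureSigma_eq_comap_restrict]
  exact indep_iSup_of_disjoint (fun s => (hW s).comap_le) h.iIndep (S := {u | u ≤ 0})
    (T := {v | t ≤ v}) (Set.disjoint_left.mpr fun u (hu : u ≤ 0) (hv : t ≤ u) => by omega)

end Sequences

section MixingCoefficient

variable {Ω : Type*} [MeasurableSpace Ω] {P : Measure Ω} {W : ℤ → Ω → ℝ} {t : ℤ}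

theorem alphaMix_le {α : ℝ} (hα : 0 ≤ α)
    (h : ∀ A B, MeasurableSet[pastSigma W] A → MeasurableSet[futureSigma W t] B →
      |P.real (A ∩ B) - P.real A * P.real B| ≤ α) :
    alphaMix P W t ≤ α :=
  Real.sSup_le (by rintro _ ⟨A, B, hA, hB, rfl⟩; exact h A B hA hB) hα

variable [IsProbabilityMeasure P]

theorem abs_measureReal_inter_sub_mul_le_one (A B : Set Ω) :
    |P.real (A ∩ B) - P.real A * P.real B| ≤ 1 := by
  have hmul : P.real A * P.real B ≤ 1 :=
    mul_le_one₀ measureReal_le_one measureReal_nonneg measureReal_le_one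
  simpa using abs_sub_le_of_le_of_le (measureReal_nonneg (μ := P) (s := A ∩ B))
    measureReal_le_one (by positivity) hmul

theorem le_alphaMix {A B : Set Ω} (hA : MeasurableSet[pastSigma W] A)
    (hB : MeasurableSet[futureSigma W t] B) :
    |P.real (A ∩ B) - P.real A * P.real B| ≤ alphaMix P W t :=
  le_csSup ⟨1, by rintro _ ⟨A, B, -, -, rfl⟩; exact abs_measureReal_inter_sub_mul_le_one A B⟩
    ⟨A, B, hA, hB, rfl⟩

theorem alphaMix_nonneg : 0 ≤ alphaMix P W t :=
  (abs_nonneg _).trans (le_alphaMix (P := P) (@MeasurableSet.empty _ (pastSigma W))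
    (@MeasurableSet.empty _ (futureSigma W t)))

end MixingCoefficient

theorem stmt_19_general {Ω : Type*} [MeasurableSpace Ω] (P : Measure Ω) [IsProbabilityMeasure P]
    (X δ : ℤ → Ω → ℝ)
    (hmeasX : ∀ t, Measurable (X t)) (hmeasδ : ∀ t, Measurable (δ t))
    (hiidδ : iIndepFun δ P)
    (hindep : IndepFun (fun ω => fun t : ℤ => X t ω) (fun ω => fun t : ℤ => δ t ω) P)
    (g : ℝ × ℝ × ℝ → ℝ) (hg : Measurable g) :
    ∀ t : ℤ, 2 ≤ t →
      alphaMix P (fun s ω => g (X s ω, δ s ω, δ (s - 1) ω)) t ≤ alphaMix P X t := by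
  intro t ht
  have hZY : IndepFun (fun ω => ((fun (u : {u : ℤ // u ≤ 0}) => δ u ω),
      fun (v : {v : ℤ // t - 1 ≤ v}) => δ v ω)) (fun ω s => X s ω) P :=
    hindep.symm.comp
      ((measurable_pi_lambda _ fun u : {u : ℤ // u ≤ 0} => measurable_pi_apply (u : ℤ)).prodMk
        (measurable_pi_lambda _ fun v : {v : ℤ // t - 1 ≤ v} => measurable_pi_apply (v : ℤ)))
      measurable_id
  refine alphaMix_le alphaMix_nonneg fun A B hA hB => ?_
  refine abs_measureReal_inter_sub_mul_le_of_indepFun_noise (measurable_pi_lambda _ hmeasX)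
    (measurable_pi_lambda (fun ω (u : {u : ℤ // u ≤ 0}) => δ u ω) fun u => hmeasδ u)
    (measurable_pi_lambda (fun ω (v : {v : ℤ // t - 1 ≤ v}) => δ v ω) fun v => hmeasδ v)
    (hiidδ.indepFun_restrict_past_future hmeasδ (t := t - 1) (by omega)) hZY
    (pastSigma_le measurable_pi_apply) (futureSigma_le measurable_pi_apply t)
    (fun A B hA hB => le_alphaMix ((pastSigma_eq_comap_path X).symm ▸ hA)
      ((futureSigma_eq_comap_path X t).symm ▸ hB)) ?_ ?_
  · refine (pastSigma_comp_le_sup hg X δ).trans (le_of_eq ?_) A hA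
    rw [pastSigma_eq_comap_path X, pastSigma_eq_comap_restrict δ]
  · refine (futureSigma_comp_le_sup hg X δ t).trans (le_of_eq ?_) B hB
    rw [futureSigma_eq_comap_path X t, futureSigma_eq_comap_restrict δ]

theorem stmt_19 {Ω : Type*} [MeasurableSpace Ω] (P : Measure Ω) [IsProbabilityMeasure P]
    (X δ : ℤ → Ω → ℝ)
    (hmeasX : ∀ t, Measurable (X t)) (hmeasδ : ∀ t, Measurable (δ t))
    (hiidδ : iIndepFun δ P)
    (hidδ : ∀ t : ℤ, IdentDistrib (δ t) (δ 1) P P)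
    (hindep : IndepFun (fun ω => fun t : ℤ => X t ω) (fun ω => fun t : ℤ => δ t ω) P)
    (g : ℝ × ℝ × ℝ → ℝ) (hg : Measurable g) :
    ∀ t : ℤ, 2 ≤ t →
      alphaMix P (fun s ω => g (X s ω, δ s ω, δ (s - 1) ω)) t ≤ alphaMix P X t :=
  stmt_19_general P X δ hmeasX hmeasδ hiidδ hindep g hg
end
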